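/- arXiv:1308.0288 — 4 statements merged into one kernel-verified Lean document; each statement's English description precedes it below -/
import Mathlib

section
/- The action of GL(2,ℝ) on 2×2 real symmetric matrices given by h ↦ (det B) Bᵀ h B is transitive on the set of symmetric matrices with negative determinant: for every 2×2 real symmetric matrix h with det h < 0, there exists B ∈ GL(2,ℝ) such that (det B) Bᵀ h B = [[0,1],[1,0]]. -/
set_option maxHeartbeats 1000000 in
lemma gl2_aux (a b c : ℝ) (ha : a ≠ 0) (hdet : a*c - b*b < 0) :
    ∃ B : Matrix (Fin 2) (Fin 2) ℝ, B.det ≠ 0 ∧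
      B.det • (B.transpose * !![a, b; b, c] * B) = !![(0 : ℝ), 1; 1, 0] := by
  obtain ⟨s, hspos, hs2⟩ : ∃ s : ℝ, 0 < s ∧ s*s = b*b - a*c :=
    ⟨Real.sqrt (b*b - a*c), Real.sqrt_pos.mpr (by linarith),
      Real.mul_self_sqrt (by linarith)⟩
  obtain ⟨r, hrpos, hr2⟩ : ∃ r : ℝ, 0 < r ∧ r*r*a^2 = 4*s^3 := by
    refine ⟨Real.sqrt (4*s^3/a^2), Real.sqrt_pos.mpr (by positivity), ?_⟩
    rw [Real.mul_self_sqrt (by positivity)]; field_simp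
  have hT : (!![(-b-s)/a, ((-b+s)/a)/r; 1, 1/r] : Matrix (Fin 2) (Fin 2) ℝ).transpose
      = !![(-b-s)/a, 1; ((-b+s)/a)/r, 1/r] := by
    ext i j; fin_cases i <;> fin_cases j <;> rfl
  refine ⟨!![(-b-s)/a, ((-b+s)/a)/r; 1, 1/r], ?_, ?_⟩
  · simp only [Matrix.det_fin_two_of]
    intro hc
    have : (-b-s)/a * (1/r) - ((-b+s)/a)/r * 1 = (-2*s)/(a*r) := by
      field_simp; ring
    rw [this] at hc
    rcases div_eq_zero_iff.mp hc with h1 | h2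
    · linarith
    · exact absurd h2 (mul_ne_zero ha hrpos.ne')
  · rw [hT]
    ext i j
    fin_cases i <;> fin_cases j <;>
      simp [Matrix.mul_apply, Fin.sum_univ_two, Matrix.det_fin_two_of] <;>
      field_simp <;> ring_nf <;>
      first
        | (right; linear_combination hs2)
        | (right; linear_combination (a^2*r^4)*hs2)
        | linear_combination (-2*s*a^2*r^3)*hs2 - (a^2*r^3)*hr2
        | nlinarith [hs2, hr2, hspos, hrpos, sq_nonneg r, sq_nonneg s]

/-- The GL(2,ℝ)-action h ↦ (det B) Bᵀ h B is transitive on the symmetric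
matrices of negative determinant: any such h can be brought to [[0,1],[1,0]]. -/
theorem gl2_action_transitive_on_neg_det_symm
    (h : Matrix (Fin 2) (Fin 2) ℝ) (hsymm : h.IsSymm) (hdet : h.det < 0) :
    ∃ B : Matrix (Fin 2) (Fin 2) ℝ, B.det ≠ 0 ∧
      B.det • (B.transpose * h * B) = !![(0 : ℝ), 1; 1, 0] := by
  have hb : h 1 0 = h 0 1 := by
    have := congrFun (congrFun hsymm 0) 1
    simpa [Matrix.transpose_apply] using this
  have hrep : h = !![h 0 0, h 0 1; h 0 1, h 1 1] := by
    ext i j; fin_cases i <;> fin_cases j <;> simp [hb]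
  set a := h 0 0; set b := h 0 1; set c := h 1 1
  have hdet' : a*c - b*b < 0 := by
    rw [Matrix.det_fin_two] at hdet; rw [hb] at hdet; linarith
  rw [hrep]
  by_cases ha : a ≠ 0
  · exact gl2_aux a b c ha hdet'
  · push_neg at ha
    have hbne : b ≠ 0 := by intro hb0; rw [ha, hb0] at hdet'; simp at hdet'
    by_cases h1 : 2*b + c ≠ 0
    · obtain ⟨B', hB'det, hB'⟩ := gl2_aux (2*b+c) (b+c) c h1 (by rw [ha] at hdet'; nlinarith)
      refine ⟨!![(1:ℝ),0;1,1] * B', ?_, ?_⟩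
      · rw [Matrix.det_mul]; simpa using hB'det
      · have hTh : (!![(1:ℝ),0;1,1]).transpose * !![a, b; b, c] * !![(1:ℝ),0;1,1]
            = !![2*b+c, b+c; b+c, c] := by
          rw [ha, show (!![(1:ℝ),0;1,1]).transpose = !![(1:ℝ),1;0,1] from by
            ext i j; fin_cases i <;> fin_cases j <;> rfl]
          ext i j; fin_cases i <;> fin_cases j <;>
            simp [Matrix.mul_apply, Fin.sum_univ_two] <;> ring
        rw [Matrix.det_mul, Matrix.transpose_mul]
        have : B'.transpose * (!![(1:ℝ),0;1,1]).transpose * !![a, b; b, c] *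
            (!![(1:ℝ),0;1,1] * B') = B'.transpose * !![2*b+c, b+c; b+c, c] * B' := by
          rw [← hTh]; noncomm_ring
        rw [this]
        simpa using hB'
    · push_neg at h1
      have h2 : c - 2*b ≠ 0 := by intro h2'; apply hbne; linarith
      obtain ⟨B', hB'det, hB'⟩ := gl2_aux (c-2*b) (b-c) c h2 (by rw [ha] at hdet'; nlinarith)
      refine ⟨!![(1:ℝ),0;-1,1] * B', ?_, ?_⟩
      · rw [Matrix.det_mul]; simpa using hB'det
      · have hTh : (!![(1:ℝ),0;-1,1]).transpose * !![a, b; b, c] * !![(1:ℝ),0;-1,1]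
            = !![c-2*b, b-c; b-c, c] := by
          rw [ha, show (!![(1:ℝ),0;-1,1]).transpose = !![(1:ℝ),-1;0,1] from by
            ext i j; fin_cases i <;> fin_cases j <;> rfl]
          ext i j; fin_cases i <;> fin_cases j <;>
            simp [Matrix.mul_apply, Fin.sum_univ_two] <;> ring
        rw [Matrix.det_mul, Matrix.transpose_mul]
        have : B'.transpose * (!![(1:ℝ),0;-1,1]).transpose * !![a, b; b, c] *
            (!![(1:ℝ),0;-1,1] * B') = B'.transpose * !![c-2*b, b-c; b-c, c] * B' := by
          rw [← hTh]; noncomm_ring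
        rw [this]
        simpa using hB'
end

section
/- Fix continuous functions ℓ, f : ℝ → ℝ, and suppose x, e₁, e₂, e₃ : ℝ² → ℝ³ are C² functions satisfying the system: ∂x/∂u = e₁, ∂x/∂v = e₂, ∂e₁/∂u = 0, ∂e₁/∂v = e₃, ∂e₂/∂u = e₃, ∂e₂/∂v = (u·ℓ(v) + f(v))·e₁, ∂e₃/∂u = 0, ∂e₃/∂v = ℓ(v)·e₁. Then there exist functions x̄, ē₁, ē₂, ē₃ of v alone such that x(u,v) = u·ē₁(v) + x̄(v), e₁(u,v) = ē₁(v), e₂(u,v) = u·ē₃(v) + ē₂(v), e₃(u,v) = ē₃(v), and these satisfy x̄' = ē₂, ē₁' = ē₃, ē₂' = f·ē₁, ē₃' = ℓ·ē₁. -/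
/-! The equations ∂e₁/∂u = ∂e₃/∂u = 0 make e₁ and e₃ independent of u, so the remaining
u-equations ∂x/∂u = e₁ and ∂e₂/∂u = e₃ have u-independent right-hand sides and x, e₂ are
affine in u. Taking ē_i(v) := e_i(0, v) and x̄(v) := x(0, v), the v-equations at u = 0 are
exactly the ODE system. -/

theorem eq_smul_add_of_hasDerivAt_const {E : Type*} [NormedAddCommGroup E] [NormedSpace ℝ E]
    {g : ℝ → E} {c : E} (h : ∀ t, HasDerivAt g c t) (t : ℝ) : g t = t • c + g 0 := by
  have h_sub : ∀ s, HasDerivAt (fun s => g s - s • c) 0 s := fun s =>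
    ((h s).sub ((hasDerivAt_id s).smul_const c)).congr_deriv (by simp)
  have h_const := is_const_of_deriv_eq_zero (fun s => (h_sub s).differentiableAt)
    (fun s => (h_sub s).deriv) t 0
  simp only [zero_smul, sub_zero] at h_const
  rw [← h_const, add_sub_cancel]

theorem pde_system_reduces_to_ode_general
    (ℓ f : ℝ → ℝ)
    (x e₁ e₂ e₃ : ℝ × ℝ → (Fin 3 → ℝ))
    (hxu : ∀ u v, HasDerivAt (fun u' => x (u', v)) (e₁ (u, v)) u)
    (hxv : ∀ u v, HasDerivAt (fun v' => x (u, v')) (e₂ (u, v)) v)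
    (he₁u : ∀ u v, HasDerivAt (fun u' => e₁ (u', v)) 0 u)
    (he₁v : ∀ u v, HasDerivAt (fun v' => e₁ (u, v')) (e₃ (u, v)) v)
    (he₂u : ∀ u v, HasDerivAt (fun u' => e₂ (u', v)) (e₃ (u, v)) u)
    (he₂v : ∀ u v, HasDerivAt (fun v' => e₂ (u, v'))
      ((u * ℓ v + f v) • e₁ (u, v)) v)
    (he₃u : ∀ u v, HasDerivAt (fun u' => e₃ (u', v)) 0 u)
    (he₃v : ∀ u v, HasDerivAt (fun v' => e₃ (u, v')) (ℓ v • e₁ (u, v)) v) :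
    ∃ xb eb₁ eb₂ eb₃ : ℝ → (Fin 3 → ℝ),
      (∀ u v, x (u, v) = u • eb₁ v + xb v) ∧
      (∀ u v, e₁ (u, v) = eb₁ v) ∧
      (∀ u v, e₂ (u, v) = u • eb₃ v + eb₂ v) ∧
      (∀ u v, e₃ (u, v) = eb₃ v) ∧
      (∀ v, HasDerivAt xb (eb₂ v) v) ∧
      (∀ v, HasDerivAt eb₁ (eb₃ v) v) ∧
      (∀ v, HasDerivAt eb₂ (f v • eb₁ v) v) ∧
      (∀ v, HasDerivAt eb₃ (ℓ v • eb₁ v) v) := by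
  have he₁ : ∀ u v, e₁ (u, v) = e₁ (0, v) := fun u v => by
    simpa using eq_smul_add_of_hasDerivAt_const (he₁u · v) u
  have he₃ : ∀ u v, e₃ (u, v) = e₃ (0, v) := fun u v => by
    simpa using eq_smul_add_of_hasDerivAt_const (he₃u · v) u
  refine ⟨fun v => x (0, v), fun v => e₁ (0, v), fun v => e₂ (0, v), fun v => e₃ (0, v),
    fun u v => ?_, he₁, fun u v => ?_, he₃, hxv 0, he₁v 0, fun v => ?_, he₃v 0⟩
  · exact eq_smul_add_of_hasDerivAt_const (fun u => he₁ u v ▸ hxu u v) u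
  · exact eq_smul_add_of_hasDerivAt_const (fun u => he₃ u v ▸ he₂u u v) u
  · simpa using he₂v 0 v

/-- Every C² solution of the structure PDE system (4.4) for hyperbolic affine
flat, affine minimal surfaces reduces to the ODE system (4.6): there exist
functions of v alone with x(u,v) = u ē₁(v) + x̄(v), e₁ = ē₁, e₂ = u ē₃ + ē₂,
e₃ = ē₃, and x̄' = ē₂, ē₁' = ē₃, ē₂' = f ē₁, ē₃' = ℓ ē₁. -/
theorem pde_system_reduces_to_ode
    (ℓ f : ℝ → ℝ) (hℓ : Continuous ℓ) (hf : Continuous f)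
    (x e₁ e₂ e₃ : ℝ × ℝ → (Fin 3 → ℝ))
    (hx : ContDiff ℝ 2 x) (he₁ : ContDiff ℝ 2 e₁)
    (he₂ : ContDiff ℝ 2 e₂) (he₃ : ContDiff ℝ 2 e₃)
    (hxu : ∀ u v, HasDerivAt (fun u' => x (u', v)) (e₁ (u, v)) u)
    (hxv : ∀ u v, HasDerivAt (fun v' => x (u, v')) (e₂ (u, v)) v)
    (he₁u : ∀ u v, HasDerivAt (fun u' => e₁ (u', v)) 0 u)
    (he₁v : ∀ u v, HasDerivAt (fun v' => e₁ (u, v')) (e₃ (u, v)) v)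
    (he₂u : ∀ u v, HasDerivAt (fun u' => e₂ (u', v)) (e₃ (u, v)) u)
    (he₂v : ∀ u v, HasDerivAt (fun v' => e₂ (u, v'))
      ((u * ℓ v + f v) • e₁ (u, v)) v)
    (he₃u : ∀ u v, HasDerivAt (fun u' => e₃ (u', v)) 0 u)
    (he₃v : ∀ u v, HasDerivAt (fun v' => e₃ (u, v')) (ℓ v • e₁ (u, v)) v) :
    ∃ xb eb₁ eb₂ eb₃ : ℝ → (Fin 3 → ℝ),
      (∀ u v, x (u, v) = u • eb₁ v + xb v) ∧
      (∀ u v, e₁ (u, v) = eb₁ v) ∧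
      (∀ u v, e₂ (u, v) = u • eb₃ v + eb₂ v) ∧
      (∀ u v, e₃ (u, v) = eb₃ v) ∧
      (∀ v, HasDerivAt xb (eb₂ v) v) ∧
      (∀ v, HasDerivAt eb₁ (eb₃ v) v) ∧
      (∀ v, HasDerivAt eb₂ (f v • eb₁ v) v) ∧
      (∀ v, HasDerivAt eb₃ (ℓ v • eb₁ v) v) :=
  pde_system_reduces_to_ode_general ℓ f x e₁ e₂ e₃ hxu hxv he₁u he₁v he₂u he₂v he₃u he₃v
end

section
/- Let f : ℝ → ℝ be continuous, and let F, G : ℝ → ℝ be the C² functions with F'' = f, G''(v) = v·f(v), F(0)=F'(0)=G(0)=G'(0)=0. Consider the map x(u,v) = (u + F(v), v, uv + G(v)) and set e₁(u,v) = ∂x/∂u = (1, 0, v), e₂(u,v) = ∂x/∂v = (F'(v), 1, u + G'(v)), e₃ = (0,0,1). Then these satisfy the full system ∂e₁/∂u = 0, ∂e₁/∂v = e₃, ∂e₂/∂u = e₃, ∂e₂/∂v = f(v)·e₁, ∂e₃/∂u = ∂e₃/∂v = 0, and det[e₁ e₂ e₃] = 1 everywhere. -/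
/-- The explicit parametrization x(u,v) = (u + F(v), v, uv + G(v)) with
F'' = f, G''(v) = v f(v), zero initial data, together with the frame
e₁ = (1,0,v), e₂ = (F'(v), 1, u + G'(v)), e₃ = (0,0,1), solves the full
structure system (4.4) with ℓ ≡ 0, and the frame is unimodular. -/
theorem improper_affine_sphere_solves_system
    (f F G F' G' : ℝ → ℝ) (hf : Continuous f)
    (hF : ∀ v, HasDerivAt F (F' v) v)
    (hF' : ∀ v, HasDerivAt F' (f v) v)
    (hG : ∀ v, HasDerivAt G (G' v) v)
    (hG' : ∀ v, HasDerivAt G' (v * f v) v)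
    (hF0 : F 0 = 0) (hF'0 : F' 0 = 0) (hG0 : G 0 = 0) (hG'0 : G' 0 = 0)
    (x : ℝ → ℝ → (Fin 3 → ℝ)) (e₁ e₂ e₃ : ℝ → ℝ → (Fin 3 → ℝ))
    (hxdef : ∀ u v, x u v = ![u + F v, v, u * v + G v])
    (he₁def : ∀ u v, e₁ u v = ![1, 0, v])
    (he₂def : ∀ u v, e₂ u v = ![F' v, 1, u + G' v])
    (he₃def : ∀ u v, e₃ u v = ![0, 0, 1]) :
    (∀ u v, HasDerivAt (fun u' => x u' v) (e₁ u v) u) ∧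
    (∀ u v, HasDerivAt (fun v' => x u v') (e₂ u v) v) ∧
    (∀ u v, HasDerivAt (fun u' => e₁ u' v) 0 u) ∧
    (∀ u v, HasDerivAt (fun v' => e₁ u v') (e₃ u v) v) ∧
    (∀ u v, HasDerivAt (fun u' => e₂ u' v) (e₃ u v) u) ∧
    (∀ u v, HasDerivAt (fun v' => e₂ u v') (f v • e₁ u v) v) ∧
    (∀ u v, HasDerivAt (fun u' => e₃ u' v) 0 u) ∧
    (∀ u v, HasDerivAt (fun v' => e₃ u v') 0 v) ∧
    (∀ u v, (Matrix.of fun i j => ![e₁ u v, e₂ u v, e₃ u v] j i).det = 1) := by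
  refine ⟨?_, ?_, ?_, ?_, ?_, ?_, ?_, ?_, ?_⟩
  · intro u v
    simp only [hxdef, he₁def]
    rw [hasDerivAt_pi]
    intro i
    fin_cases i <;> simp
    · exact hasDerivAt_id u
    · exact hasDerivAt_const u v
    · simpa using ((hasDerivAt_id u).mul_const v).add_const (G v)
  · intro u v
    simp only [hxdef, he₂def]
    rw [hasDerivAt_pi]
    intro i
    fin_cases i <;> simp
    · exact hF v
    · exact hasDerivAt_id v
    · exact (((hasDerivAt_id' v).const_mul u).add (hG v)).congr_deriv (by ring)
  · intro u v
    simp only [he₁def]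
    exact hasDerivAt_const u _
  · intro u v
    simp only [he₁def, he₃def]
    rw [hasDerivAt_pi]
    intro i
    fin_cases i <;> simp
    · exact hasDerivAt_const v 1
    · exact hasDerivAt_const v 0
    · exact hasDerivAt_id v
  · intro u v
    simp only [he₂def, he₃def]
    rw [hasDerivAt_pi]
    intro i
    fin_cases i <;> simp
    · exact hasDerivAt_const u _
    · exact hasDerivAt_const u 1
    · exact hasDerivAt_id u
  · intro u v
    simp only [he₁def, he₂def]
    rw [hasDerivAt_pi]
    intro i
    fin_cases i <;> simp
    · exact hF' v
    · exact hasDerivAt_const v 1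
    · simpa [mul_comm] using (hG' v).const_add u
  · intro u v
    simp only [he₃def]
    exact hasDerivAt_const u _
  · intro u v
    simp only [he₃def]
    exact hasDerivAt_const v _
  · intro u v
    rw [he₁def, he₂def, he₃def]
    simp [Matrix.det_fin_three]
end

section
/- Let a > 0 and let F, G : ℝ → ℝ satisfy F''(v) = f(v)·cosh(av), G''(v) = (1/a)·f(v)·sinh(av) for a continuous f, with F(0)=F'(0)=G(0)=G'(0)=0. Define x(u,v) = (u·cosh(av) + F(v), v, (u/a)·sinh(av) + G(v)), e₁(v) = (cosh(av), 0, (1/a)sinh(av)), e₃(v) = (a·sinh(av), 0, cosh(av)), e₂(u,v) = u·e₃(v) + (F'(v), 1, G'(v)). Then ∂x/∂u = e₁, ∂x/∂v = e₂, ∂e₁/∂v = e₃, ∂e₂/∂u = e₃, ∂e₂/∂v = (u·a² + f(v))·e₁, ∂e₃/∂v = a²·e₁, and det[e₁ e₂ e₃] = 1. -/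
open Real

/-! The frame vectors `e₁`, `e₃` satisfy `e₁' = e₃` and `e₃' = a² e₁`. Writing
`x = u e₁ + (F, v, G)` and `e₂ = u e₃ + (F', 1, G')`, every derivative in the system follows
from these two by linearity, the only other input being `(F'', 0, G'') = f · e₁`. The determinant reduces to `cosh² - sinh² = 1`. -/

section VectorCalculus

variable {𝕜 : Type*} [NontriviallyNormedField 𝕜] {E : Type*} [NormedAddCommGroup E]
  [NormedSpace 𝕜 E]

theorem hasDerivAt_vecCons₃ {f₀ f₁ f₂ : 𝕜 → E} {f₀' f₁' f₂' : E} {t : 𝕜}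
    (h₀ : HasDerivAt f₀ f₀' t) (h₁ : HasDerivAt f₁ f₁' t) (h₂ : HasDerivAt f₂ f₂' t) :
    HasDerivAt (fun s => ![f₀ s, f₁ s, f₂ s]) ![f₀', f₁', f₂'] t := by
  rw [hasDerivAt_pi]
  intro i
  fin_cases i
  exacts [h₀, h₁, h₂]

theorem hasDerivAt_smul_const_add (p q : E) (t : 𝕜) :
    HasDerivAt (fun s : 𝕜 => s • p + q) p t := by
  simpa using ((hasDerivAt_id t).smul_const p).add_const q

end VectorCalculus

theorem hasDerivAt_cosh_mul (a t : ℝ) :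
    HasDerivAt (fun s => cosh (a * s)) (a * sinh (a * t)) t := by
  simpa [mul_comm] using ((hasDerivAt_id t).const_mul a).cosh

theorem hasDerivAt_sinh_mul (a t : ℝ) :
    HasDerivAt (fun s => sinh (a * s)) (a * cosh (a * t)) t := by
  simpa [mul_comm] using ((hasDerivAt_id t).const_mul a).sinh

noncomputable def hypFrame₁ (a v : ℝ) : Fin 3 → ℝ := ![cosh (a * v), 0, (1 / a) * sinh (a * v)]

noncomputable def hypFrame₃ (a v : ℝ) : Fin 3 → ℝ := ![a * sinh (a * v), 0, cosh (a * v)]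

theorem hasDerivAt_hypFrame₁ {a : ℝ} (ha : a ≠ 0) (v : ℝ) :
    HasDerivAt (hypFrame₁ a) (hypFrame₃ a v) v := by
  refine (hasDerivAt_vecCons₃ (hasDerivAt_cosh_mul a v) (hasDerivAt_const v 0)
    ((hasDerivAt_sinh_mul a v).const_mul (1 / a))).congr_deriv ?_
  ext i
  fin_cases i <;> simp [hypFrame₃]
  field_simp

theorem hasDerivAt_hypFrame₃ {a : ℝ} (ha : a ≠ 0) (v : ℝ) :
    HasDerivAt (hypFrame₃ a) (a ^ 2 • hypFrame₁ a v) v := by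
  refine (hasDerivAt_vecCons₃ ((hasDerivAt_sinh_mul a v).const_mul a) (hasDerivAt_const v 0)
    (hasDerivAt_cosh_mul a v)).congr_deriv ?_
  ext i
  fin_cases i <;> simp [hypFrame₁] <;> field_simp

theorem det_hypFrame {a : ℝ} (ha : a ≠ 0) (u v p q : ℝ) :
    (Matrix.of fun i j =>
      ![hypFrame₁ a v, u • hypFrame₃ a v + ![p, 1, q], hypFrame₃ a v] j i).det = 1 := by
  have h := cosh_sq_sub_sinh_sq (a * v)
  simp only [Matrix.det_fin_three, Matrix.of_apply, hypFrame₁, hypFrame₃,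
    Pi.add_apply, Pi.smul_apply, Matrix.cons_val_zero, Matrix.cons_val_one,
    Matrix.cons_val_two, Matrix.tail_cons, Matrix.head_cons, smul_eq_mul]
  field_simp
  linear_combination a * h

theorem ell_positive_example_solves_system_general
    (a : ℝ) (ha : 0 < a) (f F G F' G' : ℝ → ℝ)
    (hF : ∀ v, HasDerivAt F (F' v) v)
    (hF' : ∀ v, HasDerivAt F' (f v * Real.cosh (a * v)) v)
    (hG : ∀ v, HasDerivAt G (G' v) v)
    (hG' : ∀ v, HasDerivAt G' ((1 / a) * f v * Real.sinh (a * v)) v)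
    (x : ℝ → ℝ → (Fin 3 → ℝ)) (e₁ e₃ : ℝ → (Fin 3 → ℝ))
    (e₂ : ℝ → ℝ → (Fin 3 → ℝ))
    (hxdef : ∀ u v, x u v =
      ![u * Real.cosh (a * v) + F v, v, (u / a) * Real.sinh (a * v) + G v])
    (he₁def : ∀ v, e₁ v = ![Real.cosh (a * v), 0, (1 / a) * Real.sinh (a * v)])
    (he₃def : ∀ v, e₃ v = ![a * Real.sinh (a * v), 0, Real.cosh (a * v)])
    (he₂def : ∀ u v, e₂ u v = u • e₃ v + ![F' v, 1, G' v]) :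
    (∀ u v, HasDerivAt (fun u' => x u' v) (e₁ v) u) ∧
    (∀ u v, HasDerivAt (fun v' => x u v') (e₂ u v) v) ∧
    (∀ v, HasDerivAt e₁ (e₃ v) v) ∧
    (∀ u v, HasDerivAt (fun u' => e₂ u' v) (e₃ v) u) ∧
    (∀ u v, HasDerivAt (fun v' => e₂ u v') ((u * a ^ 2 + f v) • e₁ v) v) ∧
    (∀ v, HasDerivAt e₃ (a ^ 2 • e₁ v) v) ∧
    (∀ u v, (Matrix.of fun i j => ![e₁ v, e₂ u v, e₃ v] j i).det = 1) := by
  have ha₀ : a ≠ 0 := ha.ne'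
  obtain rfl : e₁ = hypFrame₁ a := funext he₁def
  obtain rfl : e₃ = hypFrame₃ a := funext he₃def
  have hx : ∀ u v, x u v = u • hypFrame₁ a v + ![F v, v, G v] := by
    intro u v
    rw [hxdef]
    ext i
    fin_cases i <;> simp [hypFrame₁]
    ring
  have hforcing : ∀ v, ![f v * cosh (a * v), 0, 1 / a * f v * sinh (a * v)] =
      f v • hypFrame₁ a v := by
    intro v
    ext i
    fin_cases i <;> simp [hypFrame₁]
    ring
  refine ⟨fun u v => ?_, fun u v => ?_, hasDerivAt_hypFrame₁ ha₀, fun u v => ?_,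
    fun u v => ?_, hasDerivAt_hypFrame₃ ha₀, fun u v => ?_⟩
  · simp only [hx]
    exact hasDerivAt_smul_const_add _ _ u
  · simp only [hx, he₂def]
    exact ((hasDerivAt_hypFrame₁ ha₀ v).const_smul u).add
      (hasDerivAt_vecCons₃ (hF v) (hasDerivAt_id' v) (hG v))
  · simp only [he₂def]
    exact hasDerivAt_smul_const_add _ _ u
  · have h := ((hasDerivAt_hypFrame₃ ha₀ v).const_smul u).add
      (hasDerivAt_vecCons₃ (hF' v) (hasDerivAt_const v 1) (hG' v))
    rw [hforcing, smul_smul, ← add_smul] at h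
    simp only [he₂def]
    exact h
  · rw [he₂def]
    exact det_hypFrame ha₀ u v _ _

/-- The explicit parametrization (5.2) with ℓ(v) = a² > 0 solves the
structure system (4.4) and the frame is unimodular. -/
theorem ell_positive_example_solves_system
    (a : ℝ) (ha : 0 < a) (f F G F' G' : ℝ → ℝ) (hf : Continuous f)
    (hF : ∀ v, HasDerivAt F (F' v) v)
    (hF' : ∀ v, HasDerivAt F' (f v * Real.cosh (a * v)) v)
    (hG : ∀ v, HasDerivAt G (G' v) v)
    (hG' : ∀ v, HasDerivAt G' ((1 / a) * f v * Real.sinh (a * v)) v)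
    (hF0 : F 0 = 0) (hF'0 : F' 0 = 0) (hG0 : G 0 = 0) (hG'0 : G' 0 = 0)
    (x : ℝ → ℝ → (Fin 3 → ℝ)) (e₁ e₃ : ℝ → (Fin 3 → ℝ))
    (e₂ : ℝ → ℝ → (Fin 3 → ℝ))
    (hxdef : ∀ u v, x u v =
      ![u * Real.cosh (a * v) + F v, v, (u / a) * Real.sinh (a * v) + G v])
    (he₁def : ∀ v, e₁ v = ![Real.cosh (a * v), 0, (1 / a) * Real.sinh (a * v)])
    (he₃def : ∀ v, e₃ v = ![a * Real.sinh (a * v), 0, Real.cosh (a * v)])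
    (he₂def : ∀ u v, e₂ u v = u • e₃ v + ![F' v, 1, G' v]) :
    (∀ u v, HasDerivAt (fun u' => x u' v) (e₁ v) u) ∧
    (∀ u v, HasDerivAt (fun v' => x u v') (e₂ u v) v) ∧
    (∀ v, HasDerivAt e₁ (e₃ v) v) ∧
    (∀ u v, HasDerivAt (fun u' => e₂ u' v) (e₃ v) u) ∧
    (∀ u v, HasDerivAt (fun v' => e₂ u v') ((u * a ^ 2 + f v) • e₁ v) v) ∧
    (∀ v, HasDerivAt e₃ (a ^ 2 • e₁ v) v) ∧
    (∀ u v, (Matrix.of fun i j => ![e₁ v, e₂ u v, e₃ v] j i).det = 1) :=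
  ell_positive_example_solves_system_general a ha f F G F' G' hF hF' hG hG' x e₁ e₃ e₂ hxdef he₁def
    he₃def he₂def
end
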